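/- Let δ = 1 and k_n = ⌊K n log n⌋ for some K > 0, and let X_{k_n} denote the largest cluster of the nested ball B_{k_n} containing 0. Assume that for some β > 0, some n_0, and some p_* > 0, P(|X_{k_n}| ≥ β N^{k_n} for all n ≥ n_0) = p_* > 0. Then percolation occurs in G_N. -/

import Mathlib

open MeasureTheory ProbabilityTheory Filter

/-- The hierarchical group of order `N`: sequences with values in `{0, ..., N-1}`
(encoded as `ZMod N`), all but finitely many entries zero, with componentwise
addition mod `N`. -/
abbrev HierGroup (N : ℕ) := ℕ →₀ ZMod N

/-- The hierarchical distance: `0` if `x = y`, and otherwise the largest index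
(counted starting from `1`) where `x` and `y` differ. -/
noncomputable def hdist {N : ℕ} (x y : HierGroup N) : ℕ :=
  (x - y).support.sup fun i => i + 1

lemma hdist_comm {N : ℕ} (x y : HierGroup N) : hdist x y = hdist y x := by
  unfold hdist
  rw [← neg_sub y x, Finsupp.support_neg]

/-- The random graph determined by an edge configuration `ω`:
`x` and `y` are adjacent iff they are distinct and the edge `s(x,y)` is open. -/
def graphOf {V : Type*} {Ω : Type*} (E : Sym2 V → Ω → Bool) (ω : Ω) : SimpleGraph V where
  Adj x y := x ≠ y ∧ E s(x, y) ω = true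
  symm := ⟨by
    intro x y h
    refine ⟨h.1.symm, ?_⟩
    rw [Sym2.eq_swap]
    exact h.2⟩
  loopless := ⟨fun x h => h.1 rfl⟩

/-- `x` lies in an infinite cluster (connected component) of `G`. -/
def InInfiniteCluster {V : Type*} (G : SimpleGraph V) (x : V) : Prop :=
  {y | G.Reachable x y}.Infinite

/-- `G` has exactly one infinite connected component. -/
def UniqueInfiniteCluster {V : Type*} (G : SimpleGraph V) : Prop :=
  ∃! S : Set V, (∃ x, S = {y | G.Reachable x y}) ∧ S.Infinite

/-- The edge probabilities of the hierarchical random graph `G_N`: two distinct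
points at hierarchical distance `k` are joined with probability
`min (c k / N ^ (k * (1 + δ))) 1`. -/
def EdgeProbOK (N : ℕ) (δ : ℝ) (c : ℕ → ℝ) {Ω : Type*} [MeasurableSpace Ω]
    (μ : Measure Ω) (E : Sym2 (HierGroup N) → Ω → Bool) : Prop :=
  ∀ x y : HierGroup N, x ≠ y →
    μ {ω | E s(x, y) ω = true} =
      ENNReal.ofReal (min (c (hdist x y) / (N : ℝ) ^ ((hdist x y : ℝ) * (1 + δ))) 1)

/-- The `k`-ball containing `0` in the hierarchical group. -/
def hball (N : ℕ) (k : ℕ) : Set (HierGroup N) := {y | hdist 0 y ≤ k}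

/-- The `(j, l]`-annulus around `0` in the hierarchical group. -/
def hannulus (N : ℕ) (j l : ℕ) : Set (HierGroup N) :=
  {y | j < hdist 0 y ∧ hdist 0 y ≤ l}

/-- The restriction of a graph to a set `S` of vertices: only edges with both
endpoints in `S` are kept. -/
def restrictTo {V : Type*} (G : SimpleGraph V) (S : Set V) : SimpleGraph V where
  Adj a b := G.Adj a b ∧ a ∈ S ∧ b ∈ S
  symm := ⟨fun a b h => ⟨h.1.symm, h.2.2, h.2.1⟩⟩
  loopless := ⟨fun a h => G.loopless.irrefl a h.1⟩

/-- The cluster of `x` inside the `k`-ball `B_k` containing `0`, using only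
edges between points of `B_k`. -/
def clusterIn (N : ℕ) (G : SimpleGraph (HierGroup N)) (k : ℕ) (x : HierGroup N) :
    Set (HierGroup N) :=
  {y | (restrictTo G (hball N k)).Reachable x y}

/-- `S` is a largest cluster of the ball `B_k` containing `0` (in the graph `G`
restricted to `B_k`). -/
def IsLargestCluster (N : ℕ) (G : SimpleGraph (HierGroup N)) (k : ℕ)
    (S : Set (HierGroup N)) : Prop :=
  (∃ x ∈ hball N k, S = clusterIn N G k x) ∧
    ∀ x ∈ hball N k, (clusterIn N G k x).ncard ≤ S.ncard

/-- The hierarchical scales `k_n = ⌊K n log n⌋`. -/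
noncomputable def kseq (K : ℝ) (n : ℕ) : ℕ := ⌊K * n * Real.log n⌋₊


/-!
Translation by `g ∈ B_k` maps `B_k` onto itself and preserves the law of the configuration of
edges inside `B_k`, since the edges are independent and their probabilities only depend on the
hierarchical distance. So every point of `B_k` has the same probability `q_k` of lying in a cluster
of `B_k` with at least `β N^k` points. On the good event all points of `X_k` have this property;
averaging over the `N^k` points of `B_k` gives `q_{k_n} ≥ β p₊` for `n ≥ n₀`. By reverse Fatou,
with probability at least `β p₊` the cluster of `0` in `B_{k_n}` has at least `β N^{k_n}` points
for infinitely many `n`, and then the cluster of `0` in `G_N` is infinite.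
-/

open scoped ENNReal

section Balls

variable {N : ℕ}

lemma hdist_add_right (x y g : HierGroup N) : hdist (x + g) (y + g) = hdist x y := by
  rw [hdist, add_sub_add_right_eq_sub, hdist]

lemma hball_eq_supported (k : ℕ) :
    hball N k = Finsupp.supported (ZMod N) (ZMod N) (Set.Iio k) := by
  ext y
  rw [SetLike.mem_coe, Finsupp.mem_supported, hball, Set.mem_ofPred_eq, hdist, zero_sub,
    Finsupp.support_neg, Finset.sup_le_iff]
  exact forall₂_congr fun i _ => Nat.add_one_le_iff

lemma zero_mem_hball (k : ℕ) : (0 : HierGroup N) ∈ hball N k := by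
  rw [hball_eq_supported]; exact zero_mem _

lemma add_mem_hball_iff {g : HierGroup N} {k : ℕ} (hg : g ∈ hball N k) (x : HierGroup N) :
    x + g ∈ hball N k ↔ x ∈ hball N k := by
  rw [hball_eq_supported] at hg ⊢; exact add_mem_cancel_right hg

lemma ncard_hball [NeZero N] (k : ℕ) : (hball N k).ncard = N ^ k := by
  rw [hball_eq_supported, ← Nat.card_coe_set_eq, SetLike.coe_sort_coe,
    Nat.card_congr (Finsupp.supportedEquivFinsupp (M := ZMod N) (R := ZMod N) (Set.Iio k)).toEquiv,
    Nat.card_congr Finsupp.equivFunOnFinite, Nat.card_fun, Nat.card_zmod, Nat.card_coe_set_eq,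
    Set.ncard_Iio_nat]

lemma hball_finite [NeZero N] (k : ℕ) : (hball N k).Finite :=
  Set.finite_of_ncard_pos (by rw [ncard_hball]; exact pow_pos (Nat.pos_of_neZero N) k)

end Balls

section Graphs

variable {V W : Type*}

lemma restrictTo_le (G : SimpleGraph V) (S : Set V) : restrictTo G S ≤ G := fun _ _ h => h.1

lemma mem_of_reachable_restrictTo {G : SimpleGraph V} {S : Set V} {x y : V}
    (h : (restrictTo G S).Reachable x y) (hx : x ∈ S) : y ∈ S := by
  obtain ⟨w⟩ := h
  induction w with
  | nil => exact hx
  | cons hadj _ ih => exact ih hadj.2.2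

def restrictToIso {G : SimpleGraph V} {G' : SimpleGraph W} (φ : G ≃g G') {S : Set V}
    {S' : Set W} (hS : ∀ x, φ x ∈ S' ↔ x ∈ S) : restrictTo G S ≃g restrictTo G' S' where
  toEquiv := φ.toEquiv
  map_rel_iff' := by
    intro a b
    change G'.Adj (φ a) (φ b) ∧ φ a ∈ S' ∧ φ b ∈ S' ↔ _
    rw [φ.map_adj_iff, hS, hS]
    rfl

abbrev configGraph (f : Sym2 V → Bool) : SimpleGraph V :=
  graphOf (fun e c => c e) f

lemma graphOf_eq_configGraph {Ω : Type*} (E : Sym2 V → Ω → Bool) (ω : Ω) :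
    graphOf E ω = configGraph (E · ω) :=
  rfl

lemma restrictTo_configGraph_congr {f f' : Sym2 V → Bool} {S : Set V}
    (h : ∀ x ∈ S, ∀ y ∈ S, x ≠ y → f s(x, y) = f' s(x, y)) :
    restrictTo (configGraph f) S = restrictTo (configGraph f') S := by
  ext x y
  simp only [restrictTo, graphOf]
  constructor
  · rintro ⟨⟨hne, hf⟩, hx, hy⟩
    exact ⟨⟨hne, h x hx y hy hne ▸ hf⟩, hx, hy⟩
  · rintro ⟨⟨hne, hf⟩, hx, hy⟩
    exact ⟨⟨hne, (h x hx y hy hne).symm ▸ hf⟩, hx, hy⟩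

def configGraphAddRightIso [AddGroup V] (f : Sym2 V → Bool) (g : V) :
    configGraph (f ∘ Sym2.map (· + g)) ≃g configGraph f where
  toEquiv := Equiv.addRight g
  map_rel_iff' := by
    intro a b
    simp [graphOf]

end Graphs

section Clusters

variable {N : ℕ} {G : SimpleGraph (HierGroup N)} {k : ℕ} {x y : HierGroup N}

lemma clusterIn_subset_hball (hx : x ∈ hball N k) : clusterIn N G k x ⊆ hball N k :=
  fun _ hy => mem_of_reachable_restrictTo hy hx

lemma clusterIn_subset_reachable : clusterIn N G k x ⊆ {y | G.Reachable x y} :=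
  fun _ hy => hy.mono (restrictTo_le G _)

lemma clusterIn_eq_of_mem (hy : y ∈ clusterIn N G k x) : clusterIn N G k y = clusterIn N G k x :=
  Set.ext fun _ => ⟨(hy : (restrictTo G _).Reachable x y).trans,
    (hy : (restrictTo G _).Reachable x y).symm.trans⟩

lemma clusterIn_configGraph_eq_image {g : HierGroup N} (hg : g ∈ hball N k)
    (f : Sym2 (HierGroup N) → Bool) :
    clusterIn N (configGraph f) k g =
      (· + g) '' clusterIn N (configGraph (f ∘ Sym2.map (· + g))) k 0 := by
  let φ := restrictToIso (configGraphAddRightIso f g) (S := hball N k) (S' := hball N k)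
    (add_mem_hball_iff hg)
  have hreach : ∀ z, (restrictTo (configGraph f) (hball N k)).Reachable g (z + g) ↔
      (restrictTo (configGraph (f ∘ Sym2.map (· + g))) (hball N k)).Reachable 0 z := by
    intro z
    simpa [φ, restrictToIso, configGraphAddRightIso] using φ.reachable_iff (u := 0) (v := z)
  ext y
  refine ⟨fun h => ⟨y - g, (hreach _).1 (by rw [sub_add_cancel]; exact h), sub_add_cancel y g⟩, ?_⟩
  rintro ⟨z, hz, rfl⟩
  exact (hreach z).2 hz

def ballEdges (N k : ℕ) : Set (Sym2 (HierGroup N)) :=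
  {e | ¬ e.IsDiag ∧ ∀ z ∈ e, z ∈ hball N k}

lemma mk_mem_ballEdges {a b : HierGroup N} :
    s(a, b) ∈ ballEdges N k ↔ a ≠ b ∧ a ∈ hball N k ∧ b ∈ hball N k := by
  simp [ballEdges]

lemma ballEdges_finite [NeZero N] (k : ℕ) : (ballEdges N k).Finite := by
  refine (((hball_finite k).prod (hball_finite k)).image fun p => s(p.1, p.2)).subset ?_
  intro e he
  induction e with
  | h a b => exact ⟨(a, b), (mk_mem_ballEdges.1 he).2, rfl⟩

lemma dependsOn_clusterIn_configGraph (x : HierGroup N) :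
    DependsOn (fun f => clusterIn N (configGraph f) k x) (ballEdges N k) := by
  intro f f' h
  simp only [clusterIn]
  rw [restrictTo_configGraph_congr fun a ha b hb hab => h _ (mk_mem_ballEdges.2 ⟨hab, ha, hb⟩)]

end Clusters

section Probability

variable {ι Ω : Type*} [MeasurableSpace Ω] {μ : Measure Ω}

lemma map_eq_map_of_measure_eq_true [IsProbabilityMeasure μ] {X Y : Ω → Bool}
    (hX : Measurable X) (hY : Measurable Y) (h : μ {ω | X ω = true} = μ {ω | Y ω = true}) :
    μ.map X = μ.map Y := by
  have := Measure.isProbabilityMeasure_map (μ := μ) hX.aemeasurable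
  have := Measure.isProbabilityMeasure_map (μ := μ) hY.aemeasurable
  have htrue : μ.map X {true} = μ.map Y {true} := by
    rw [Measure.map_apply hX (measurableSet_singleton _),
      Measure.map_apply hY (measurableSet_singleton _)]
    exact h
  have hfalse : ({false} : Set Bool) = {true}ᶜ := by ext b; simp
  refine Measure.ext_of_singleton fun b => ?_
  cases b
  · rw [hfalse, prob_compl_eq_one_sub (measurableSet_singleton _),
      prob_compl_eq_one_sub (measurableSet_singleton _), htrue]
  · exact htrue

variable {E : ι → Ω → Bool} {s : Set ι} {Φ : (ι → Bool) → Prop}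

lemma measurableSet_setOf_of_dependsOn (hE : ∀ i, Measurable (E i)) (hs : s.Finite)
    (hΦ : DependsOn Φ s) : MeasurableSet {ω | Φ (fun i => E i ω)} := by
  obtain ⟨Ψ, rfl⟩ := dependsOn_iff_exists_comp.1 hΦ
  have := hs.to_subtype
  exact (measurable_pi_lambda (fun ω (i : s) => E i ω) fun i => hE i)
    (Set.toFinite {b | Ψ b}).measurableSet

lemma measure_setOf_comp_eq_of_dependsOn [IsProbabilityMeasure μ] (hE : ∀ i, Measurable (E i))
    (hind : iIndepFun E μ) (hs : s.Finite) {τ : ι → ι} (hτ : s.InjOn τ)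
    (hmarg : ∀ i ∈ s, μ {ω | E (τ i) ω = true} = μ {ω | E i ω = true})
    (hΦ : DependsOn Φ s) :
    μ {ω | Φ (fun i => E (τ i) ω)} = μ {ω | Φ (fun i => E i ω)} := by
  obtain ⟨Ψ, rfl⟩ := dependsOn_iff_exists_comp.1 hΦ
  have := hs.fintype
  have hX : Measurable fun ω (i : s) => E i ω := measurable_pi_lambda _ fun i => hE i
  have hY : Measurable fun ω (i : s) => E (τ i) ω := measurable_pi_lambda _ fun i => hE _
  have hlaw : μ.map (fun ω (i : s) => E (τ i) ω) = μ.map (fun ω (i : s) => E i ω) := by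
    rw [(iIndepFun_iff_map_fun_eq_pi_map fun i => (hE _).aemeasurable).1
        (hind.precomp (g := fun i : s => τ i) hτ.injective),
      (iIndepFun_iff_map_fun_eq_pi_map fun i => (hE _).aemeasurable).1
        (hind.precomp Subtype.val_injective)]
    congr with i : 1
    exact map_eq_map_of_measure_eq_true (hE _) (hE _) (hmarg i i.2)
  have hT : MeasurableSet {b | Ψ b} := (Set.toFinite _).measurableSet
  change μ ((fun ω (i : s) => E (τ i) ω) ⁻¹' {b | Ψ b}) =
    μ ((fun ω (i : s) => E i ω) ⁻¹' {b | Ψ b})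
  rw [← Measure.map_apply hY hT, ← Measure.map_apply hX hT, hlaw]

open scoped Classical in
lemma mul_measure_le_of_le_card_filter {V : Type*} {F : Finset V} (hF : F.Nonempty)
    {A : V → Set Ω} (hA : ∀ x ∈ F, MeasurableSet (A x)) {p : ℝ≥0∞}
    (hp : ∀ x ∈ F, μ (A x) = p) {r : ℝ≥0∞} {G : Set Ω}
    (hG : ∀ ω ∈ G, r * F.card ≤ (F.filter fun x => ω ∈ A x).card) :
    r * μ G ≤ p := by
  -- Markov's inequality for `count`, whose mean is `#F * p`.
  let count : Ω → ℝ≥0∞ := fun ω => ∑ x ∈ F, (A x).indicator 1 ω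
  have hcount : ∀ ω, count ω = (F.filter fun x => ω ∈ A x).card := by
    intro ω
    simp [count, Set.indicator_apply, Finset.sum_boole]
  have hmeas : AEMeasurable count μ :=
    Finset.aemeasurable_fun_sum _ fun x hx => aemeasurable_one.indicator (hA x hx)
  have hint : ∫⁻ ω, count ω ∂μ = F.card * p := by
    rw [lintegral_finsetSum' (f := fun x => (A x).indicator 1) _
        fun x hx => aemeasurable_one.indicator (hA x hx),
      Finset.sum_congr rfl fun x hx => by rw [lintegral_indicator_one (hA x hx), hp x hx],
      Finset.sum_const, nsmul_eq_mul]
  have hcard : (F.card : ℝ≥0∞) ≠ 0 := by simpa using hF.ne_empty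
  refine (ENNReal.mul_le_mul_iff_right hcard (ENNReal.natCast_ne_top _)).1 ?_
  calc F.card * (r * μ G) = r * F.card * μ G := by ring
    _ ≤ r * F.card * μ {ω | r * F.card ≤ count ω} := by
        gcongr
        intro ω hω
        change _ ≤ count ω
        rw [hcount]
        exact hG ω hω
    _ ≤ ∫⁻ ω, count ω ∂μ := mul_meas_ge_le_lintegral₀ hmeas _
    _ = F.card * p := hint

lemma le_measure_limsup_atTop [IsFiniteMeasure μ] {s : ℕ → Set Ω}
    (hs : ∀ n, MeasurableSet (s n)) {q : ℝ≥0∞} (hq : ∀ᶠ n in atTop, q ≤ μ (s n)) :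
    q ≤ μ (limsup s atTop) := by
  rw [limsup_eq_iInf_iSup_of_nat]
  simp only [Set.iSup_eq_iUnion, Set.iInf_eq_iInter]
  rw [Antitone.measure_iInter (s := fun n => ⋃ i ≥ n, s i)
    (fun m n hmn => Set.iUnion₂_mono' fun i hi => ⟨i, hmn.trans hi, le_rfl⟩)
    (fun n => (MeasurableSet.iUnion fun i => MeasurableSet.iUnion fun _ => hs i).nullMeasurableSet)
    ⟨0, measure_ne_top _ _⟩]
  refine le_iInf fun n => ?_
  obtain ⟨m, hqm, hnm⟩ := (hq.and (eventually_ge_atTop n)).exists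
  exact hqm.trans (measure_mono (le_iSup₂ (f := fun i (_ : i ≥ n) => s i) m hnm))

end Probability

lemma Set.infinite_of_frequently_le_ncard {α ι : Type*} {l : Filter ι} {s : Set α}
    {t : ι → Set α} (ht : ∀ i, t i ⊆ s) {u : ι → ℝ} (hu : Tendsto u l atTop)
    (h : ∃ᶠ i in l, u i ≤ (t i).ncard) : s.Infinite := by
  intro hs
  obtain ⟨i, hle, hgt⟩ := (h.and_eventually (hu.eventually_gt_atTop (s.ncard : ℝ))).exists
  have : ((t i).ncard : ℝ) ≤ s.ncard := by exact_mod_cast Set.ncard_le_ncard (ht i) hs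
  linarith

lemma tendsto_kseq_atTop {K : ℝ} (hK : 0 < K) : Tendsto (kseq K) atTop atTop :=
  tendsto_nat_floor_atTop.comp <|
    (tendsto_natCast_atTop_atTop.const_mul_atTop hK).atTop_mul_atTop₀
      (Real.tendsto_log_atTop.comp tendsto_natCast_atTop_atTop)

section BigClusters

variable {N : ℕ} {β : ℝ} {k : ℕ}

def HasBigClusterIn (N : ℕ) (β : ℝ) (k : ℕ) (G : SimpleGraph (HierGroup N)) (x : HierGroup N) :
    Prop :=
  β * (N : ℝ) ^ k ≤ (clusterIn N G k x).ncard

lemma dependsOn_hasBigClusterIn (x : HierGroup N) :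
    DependsOn (fun f => HasBigClusterIn N β k (configGraph f) x) (ballEdges N k) :=
  fun _ _ h => by simp only [HasBigClusterIn, dependsOn_clusterIn_configGraph x h]

lemma hasBigClusterIn_configGraph_iff {g : HierGroup N} (hg : g ∈ hball N k)
    (f : Sym2 (HierGroup N) → Bool) :
    HasBigClusterIn N β k (configGraph f) g ↔
      HasBigClusterIn N β k (configGraph (f ∘ Sym2.map (· + g))) 0 := by
  rw [HasBigClusterIn, HasBigClusterIn, clusterIn_configGraph_eq_image hg,
    Set.ncard_image_of_injective _ (add_left_injective g)]

variable {Ω : Type*} [MeasurableSpace Ω] {μ : Measure Ω} [IsProbabilityMeasure μ]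
  {E : Sym2 (HierGroup N) → Ω → Bool}

lemma IsLargestCluster.exists_hasBigClusterIn {G : SimpleGraph (HierGroup N)}
    {S : Set (HierGroup N)} (hS : IsLargestCluster N G k S) (hβS : β * (N : ℝ) ^ k ≤ S.ncard) :
    ∃ x ∈ hball N k, HasBigClusterIn N β k G x :=
  let ⟨⟨x, hx, hSx⟩, _⟩ := hS
  ⟨x, hx, by rwa [HasBigClusterIn, ← hSx]⟩

lemma measurableSet_hasBigClusterIn [NeZero N] (hE : ∀ e, Measurable (E e)) (x : HierGroup N) :
    MeasurableSet {ω | HasBigClusterIn N β k (graphOf E ω) x} :=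
  measurableSet_setOf_of_dependsOn hE (ballEdges_finite k) (dependsOn_hasBigClusterIn x)

lemma measure_hasBigClusterIn_eq [NeZero N] {δ : ℝ} {c : ℕ → ℝ} (hE : ∀ e, Measurable (E e))
    (hind : iIndepFun E μ) (hprob : EdgeProbOK N δ c μ E) {g : HierGroup N}
    (hg : g ∈ hball N k) :
    μ {ω | HasBigClusterIn N β k (graphOf E ω) g} =
      μ {ω | HasBigClusterIn N β k (graphOf E ω) 0} := by
  simp_rw [graphOf_eq_configGraph, hasBigClusterIn_configGraph_iff hg]
  refine measure_setOf_comp_eq_of_dependsOn hE hind (ballEdges_finite k)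
    ((Sym2.map.injective (add_left_injective g)).injOn) ?_ (dependsOn_hasBigClusterIn 0)
  intro e he
  induction e with
  | h a b =>
    have hab : a ≠ b := (mk_mem_ballEdges.1 he).1
    rw [Sym2.map_mk, hprob _ _ ((add_left_injective g).ne hab), hprob _ _ hab, hdist_add_right]

lemma ofReal_mul_measure_le_measure_hasBigClusterIn_zero [NeZero N] {δ : ℝ} {c : ℕ → ℝ}
    (hE : ∀ e, Measurable (E e)) (hind : iIndepFun E μ) (hprob : EdgeProbOK N δ c μ E)
    {G : Set Ω} (hG : ∀ ω ∈ G, ∃ x ∈ hball N k, HasBigClusterIn N β k (graphOf E ω) x) :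
    ENNReal.ofReal β * μ G ≤ μ {ω | HasBigClusterIn N β k (graphOf E ω) 0} := by
  classical
  set F := (hball_finite (N := N) k).toFinset
  have hmemF : ∀ x, x ∈ F ↔ x ∈ hball N k := fun x => Set.Finite.mem_toFinset _
  have hF : F.card = N ^ k := by
    rw [← Set.ncard_eq_toFinset_card _ (hball_finite k), ncard_hball]
  refine mul_measure_le_of_le_card_filter ⟨0, (hmemF 0).2 (zero_mem_hball k)⟩
    (fun x _ => measurableSet_hasBigClusterIn hE x)
    (fun x hx => measure_hasBigClusterIn_eq hE hind hprob ((hmemF x).1 hx)) ?_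
  rintro ω hω
  obtain ⟨x, hx, hbig⟩ := hG ω hω
  have hsub : clusterIn N (graphOf E ω) k x ⊆
      ↑(F.filter fun y => ω ∈ {ω | HasBigClusterIn N β k (graphOf E ω) y}) := by
    intro y hy
    rw [Finset.coe_filter]
    refine ⟨(hmemF y).2 (clusterIn_subset_hball hx hy), ?_⟩
    change HasBigClusterIn N β k _ y
    rwa [HasBigClusterIn, clusterIn_eq_of_mem hy]
  calc ENNReal.ofReal β * F.card = ENNReal.ofReal (β * (N : ℝ) ^ k) := by
        rw [hF, ENNReal.ofReal_mul' (by positivity), ← ENNReal.ofReal_natCast]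
        push_cast
        rfl
    _ ≤ (clusterIn N (graphOf E ω) k x).ncard := by
        rw [← ENNReal.ofReal_natCast]
        exact ENNReal.ofReal_le_ofReal hbig
    _ ≤ _ := by
        exact_mod_cast (Set.ncard_le_ncard hsub (Finset.finite_toSet _)).trans_eq
          (Set.ncard_coe_finset _)

end BigClusters

theorem percolation_of_eventually_good_balls_general
    (N : ℕ) (hN : 2 ≤ N) (K : ℝ) (hKpos : 0 < K)
    (c : ℕ → ℝ)
    (Ω : Type) [MeasurableSpace Ω] (μ : Measure Ω) [IsProbabilityMeasure μ]
    (E : Sym2 (HierGroup N) → Ω → Bool)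
    (hE : ∀ e, Measurable (E e))
    (hind : iIndepFun E μ)
    (hprob : EdgeProbOK N 1 c μ E)
    (β : ℝ) (hβ : 0 < β) (n0 : ℕ) (pstar : ENNReal) (hpstar : 0 < pstar)
    (hgood : μ {ω | ∀ n : ℕ, n0 ≤ n →
        ∃ S : Set (HierGroup N), IsLargestCluster N (graphOf E ω) (kseq K n) S ∧
          β * (N : ℝ) ^ (kseq K n) ≤ (S.ncard : ℝ)} = pstar) :
    0 < μ {ω | InInfiniteCluster (graphOf E ω) 0} := by
  have : NeZero N := ⟨by omega⟩
  let A n := {ω | HasBigClusterIn N β (kseq K n) (graphOf E ω) 0}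
  have hA : ∀ᶠ n in atTop, ENNReal.ofReal β * pstar ≤ μ (A n) := by
    filter_upwards [eventually_ge_atTop n0] with n hn
    refine hgood ▸ ofReal_mul_measure_le_measure_hasBigClusterIn_zero hE hind hprob fun ω hω => ?_
    obtain ⟨S, hS, hβS⟩ := hω n hn
    exact hS.exists_hasBigClusterIn hβS
  have hgrowth : Tendsto (fun n => β * (N : ℝ) ^ kseq K n) atTop atTop :=
    ((tendsto_pow_atTop_atTop_of_one_lt (by exact_mod_cast hN)).comp
      (tendsto_kseq_atTop hKpos)).const_mul_atTop hβ
  have hlimsup : limsup A atTop ⊆ {ω | InInfiniteCluster (graphOf E ω) 0} := fun ω hω =>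
    Set.infinite_of_frequently_le_ncard (t := fun n => clusterIn N (graphOf E ω) (kseq K n) 0)
      (fun _ => clusterIn_subset_reachable) hgrowth (mem_limsup_iff_frequently_mem.1 hω)
  calc 0 < ENNReal.ofReal β * pstar := ENNReal.mul_pos (by simpa using hβ) hpstar.ne'
    _ ≤ μ (limsup A atTop) :=
        le_measure_limsup_atTop (fun _ => measurableSet_hasBigClusterIn hE 0) hA
    _ ≤ μ {ω | InInfiniteCluster (graphOf E ω) 0} := measure_mono hlimsup

/-- Critical case `δ = 1`, `k_n = ⌊K n log n⌋`: if with positive probability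
`p₊`, for all `n ≥ n₀` the largest cluster `X_{k_n}` of the ball `B_{k_n}`
containing `0` has at least `β N^{k_n}` points, then percolation occurs. -/
theorem percolation_of_eventually_good_balls
    (N : ℕ) (hN : 2 ≤ N) (K : ℝ) (hKpos : 0 < K)
    (c : ℕ → ℝ) (hc0 : ∀ k : ℕ, 1 ≤ k → 0 ≤ c k)
    (Ω : Type) [MeasurableSpace Ω] (μ : Measure Ω) [IsProbabilityMeasure μ]
    (E : Sym2 (HierGroup N) → Ω → Bool)
    (hE : ∀ e, Measurable (E e))
    (hind : iIndepFun E μ)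
    (hprob : EdgeProbOK N 1 c μ E)
    (β : ℝ) (hβ : 0 < β) (n0 : ℕ) (pstar : ENNReal) (hpstar : 0 < pstar)
    (hgood : μ {ω | ∀ n : ℕ, n0 ≤ n →
        ∃ S : Set (HierGroup N), IsLargestCluster N (graphOf E ω) (kseq K n) S ∧
          β * (N : ℝ) ^ (kseq K n) ≤ (S.ncard : ℝ)} = pstar) :
    0 < μ {ω | InInfiniteCluster (graphOf E ω) 0} :=
  percolation_of_eventually_good_balls_general N hN K hKpos c Ω μ E hE hind hprob β hβ n0 pstar
    hpstar hgood
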